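/- arXiv:1011.1877 — 9 statements merged into one kernel-verified Lean document; each statement's English description precedes it below -/
import Mathlib

section
/- Let y : [0,∞) → ℝ be continuous and Λ ∈ ℝ. Suppose f : [0,∞) → ℝ is continuously differentiable with f(0) = 0, f'(0) = 0, and f'(x) = y(x) f(x) − ∫₀ˣ y(t) f'(t) dt − Λ ∫₀ˣ f(t) dt for all x ≥ 0. Then f vanishes identically on [0,∞). (Consequently, each eigenvalue of the associated boundary value problem has an at most one-dimensional eigenspace.) -/
open MeasureTheory Set Filter

/-!
With `A x = ∫₀ˣ y f'` and `B x = ∫₀ˣ f`, the triple `u = (f, A, B)` solves the linear system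
`u' = (f', y f', f)` where `f' = y f - A - Λ B`. On `[0, b]` the coefficient `y` is bounded,
so `‖u'‖ ≤ K ‖u‖`, and since `u 0 = 0`, Grönwall's inequality forces `u = 0` on `[0, b]`.
-/

section Primitive

variable {E : Type*} [NormedAddCommGroup E] [NormedSpace ℝ E] {g : ℝ → E} {a : ℝ}

lemma continuousOn_primitive_of_continuousOn_Ici (hg : ContinuousOn g (Ici a)) {b : ℝ}
    (hab : a ≤ b) : ContinuousOn (fun x => ∫ t in a..x, g t) (Icc a b) := by
  rw [← uIcc_of_le hab]
  refine intervalIntegral.continuousOn_primitive_interval ?_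
  rw [uIcc_of_le hab]
  exact (hg.mono Icc_subset_Ici_self).integrableOn_Icc

lemma hasDerivWithinAt_primitive_of_continuousOn_Ici [CompleteSpace E]
    (hg : ContinuousOn g (Ici a)) {x : ℝ} (hx : a ≤ x) :
    HasDerivWithinAt (fun t => ∫ s in a..t, g s) (g x) (Ici x) x :=
  have hsub : Ioi x ⊆ Ici a := Ioi_subset_Ici hx
  intervalIntegral.integral_hasDerivWithinAt_right
    ((hg.mono Icc_subset_Ici_self).intervalIntegrable_of_Icc hx)
    ((hg.stronglyMeasurableAtFilter_nhdsWithin measurableSet_Ici x).filter_mono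
      (nhdsWithin_mono x hsub))
    ((hg x hx).mono hsub)

end Primitive

lemma norm_linearSystem_le {m M Λ a b c : ℝ} (hm : |m| ≤ M) :
    ‖(m * a - b - Λ * c, m * (m * a - b - Λ * c), a)‖ ≤
      (M + 1) * (M + 1 + |Λ|) * ‖(a, b, c)‖ := by
  set N := ‖(a, b, c)‖
  set C := M + 1 + |Λ|
  have ha : |a| ≤ N := norm_fst_le (a, b, c)
  have hb : |b| ≤ N := (norm_fst_le (b, c)).trans (norm_snd_le (a, b, c))
  have hc : |c| ≤ N := (norm_snd_le (b, c)).trans (norm_snd_le (a, b, c))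
  have hM : 0 ≤ M := (abs_nonneg m).trans hm
  have hN : 0 ≤ N := norm_nonneg _
  have hC : 1 ≤ C := by linarith [abs_nonneg Λ]
  have hfirst : |m * a - b - Λ * c| ≤ C * N :=
    calc |m * a - b - Λ * c| ≤ |m| * |a| + |b| + |Λ| * |c| := by
          rw [← abs_mul, ← abs_mul]
          exact (abs_sub _ _).trans (add_le_add_left (abs_sub _ _) _)
      _ ≤ M * N + N + |Λ| * N := by gcongr
      _ = C * N := by ring
  have hCN : 0 ≤ C * N := by positivity
  have hgrow : C * N ≤ (M + 1) * C * N := by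
    rw [mul_assoc]
    exact le_mul_of_one_le_left hCN (by linarith)
  simp only [Prod.norm_def, Real.norm_eq_abs, abs_mul]
  refine max_le (hfirst.trans hgrow) (max_le ?_ ?_)
  · rw [mul_assoc]
    exact mul_le_mul (by linarith) hfirst (abs_nonneg _) (by linarith)
  · exact ha.trans ((le_mul_of_one_le_left hN hC).trans hgrow)

theorem stmt_5_general (y f f' : ℝ → ℝ) (Λ : ℝ)
    (hy : ContinuousOn y (Ici 0))
    (hderiv : ∀ x ∈ Ici (0:ℝ), HasDerivWithinAt f (f' x) (Ici 0) x)
    (hf'cont : ContinuousOn f' (Ici 0))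
    (hf0 : f 0 = 0)
    (heq : ∀ x ∈ Ici (0:ℝ),
      f' x = y x * f x - (∫ t in (0:ℝ)..x, y t * f' t) - Λ * ∫ t in (0:ℝ)..x, f t) :
    ∀ x ∈ Ici (0:ℝ), f x = 0 := by
  intro b hb
  have hf : ContinuousOn f (Ici 0) := fun x hx => (hderiv x hx).continuousWithinAt
  have hyf' : ContinuousOn (fun t => y t * f' t) (Ici 0) := hy.mul hf'cont
  obtain ⟨M, hM⟩ := isCompact_Icc.exists_bound_of_continuousOn
    (hy.mono (Icc_subset_Ici_self : Icc 0 b ⊆ _))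
  let u : ℝ → ℝ × ℝ × ℝ := fun x => (f x, ∫ t in (0:ℝ)..x, y t * f' t, ∫ t in (0:ℝ)..x, f t)
  have hu : ∀ x ∈ Icc 0 b, u x = 0 :=
    eq_zero_of_abs_deriv_le_mul_abs_self_of_eq_zero_right (f' := fun x => (f' x, y x * f' x, f x))
      ((hf.mono Icc_subset_Ici_self).prodMk
        ((continuousOn_primitive_of_continuousOn_Ici hyf' hb).prodMk
          (continuousOn_primitive_of_continuousOn_Ici hf hb)))
      (fun x hx => ((hderiv x hx.1).mono (Ici_subset_Ici.2 hx.1)).prodMk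
        ((hasDerivWithinAt_primitive_of_continuousOn_Ici hyf' hx.1).prodMk
          (hasDerivWithinAt_primitive_of_continuousOn_Ici hf hx.1)))
      (by simp [u, hf0])
      (fun x hx => by
        rw [heq x hx.1]
        exact norm_linearSystem_le (by simpa using hM x (Ico_subset_Icc_self hx)))
  exact congrArg Prod.fst (hu b ⟨hb, le_rfl⟩)

/-- Uniqueness (Gronwall): a C¹ solution of the integrated eigenvalue
equation `f'(x) = y(x)f(x) − ∫₀ˣ y f' − Λ∫₀ˣ f` with `f(0) = f'(0) = 0` vanishes
identically on `[0,∞)`. -/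
theorem stmt_5 (y f f' : ℝ → ℝ) (Λ : ℝ)
    (hy : ContinuousOn y (Ici 0))
    (hderiv : ∀ x ∈ Ici (0:ℝ), HasDerivWithinAt f (f' x) (Ici 0) x)
    (hf'cont : ContinuousOn f' (Ici 0))
    (hf0 : f 0 = 0) (hf'0 : f' 0 = 0)
    (heq : ∀ x ∈ Ici (0:ℝ),
      f' x = y x * f x - (∫ t in (0:ℝ)..x, y t * f' t) - Λ * ∫ t in (0:ℝ)..x, f t) :
    ∀ x ∈ Ici (0:ℝ), f x = 0 :=
  stmt_5_general y f f' Λ hy hderiv hf'cont hf0 heq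
end

section
/- For every finitely supported v : ℕ → ℝ one has v(0)² ≤ 2 · ( Σ_{j≥0} (v(j+1) − v(j))² )^{1/2} · ( Σ_{j≥0} v(j)² )^{1/2}. -/
/-!
Telescoping, `v 0 ^ 2 = ∑ j, (v j - v (j + 1)) * (v j + v (j + 1))` when `v` vanishes from `N` on.
Cauchy–Schwarz bounds each half of this sum by `‖Δv‖ ‖v‖`, since the shifted sequence
`v (· + 1)` has norm at most `‖v‖`.
-/

open Finset

lemma sum_range_sq_succ_le_sum_range_sq (v : ℕ → ℝ) {N : ℕ} (hN : v N = 0) :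
    ∑ j ∈ range N, v (j + 1) ^ 2 ≤ ∑ j ∈ range N, v j ^ 2 := by
  have h := (sum_range_succ' (fun j ↦ v j ^ 2) N).symm.trans (sum_range_succ (fun j ↦ v j ^ 2) N)
  rw [hN] at h
  nlinarith [sq_nonneg (v 0)]

lemma sq_le_two_mul_sqrt_sum_sq_sub_mul_sqrt_sum_sq (v : ℕ → ℝ) {N : ℕ} (hN : v N = 0) :
    v 0 ^ 2 ≤ 2 * √(∑ j ∈ range N, (v (j + 1) - v j) ^ 2) * √(∑ j ∈ range N, v j ^ 2) := by
  set D := ∑ j ∈ range N, (v (j + 1) - v j) ^ 2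
  set M := ∑ j ∈ range N, v j ^ 2
  have htelescope : v 0 ^ 2 = ∑ j ∈ range N, (v j - v (j + 1)) * v j
      + ∑ j ∈ range N, (v j - v (j + 1)) * v (j + 1) := by
    have h := sum_range_sub' (fun j ↦ v j ^ 2) N
    rw [hN, zero_pow two_ne_zero, sub_zero] at h
    rw [← h, ← sum_add_distrib]
    exact sum_congr rfl fun j _ ↦ by ring
  have hD : ∑ j ∈ range N, (v j - v (j + 1)) ^ 2 = D :=
    sum_congr rfl fun j _ ↦ sub_sq_comm _ _
  have hshift : √(∑ j ∈ range N, v (j + 1) ^ 2) ≤ √M :=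
    Real.sqrt_le_sqrt (sum_range_sq_succ_le_sum_range_sq v hN)
  calc v 0 ^ 2
      ≤ √D * √M + √D * √(∑ j ∈ range N, v (j + 1) ^ 2) := by
        rw [htelescope, ← hD]
        exact add_le_add (Real.sum_mul_le_sqrt_mul_sqrt _ _ _)
          (Real.sum_mul_le_sqrt_mul_sqrt _ _ _)
    _ ≤ √D * √M + √D * √M := by gcongr
    _ = 2 * √D * √M := by ring

lemma tsum_eq_sum_range_of_forall_le_eq_zero {M : Type*} [AddCommMonoid M] [TopologicalSpace M]
    {f : ℕ → M} {N : ℕ} (hf : ∀ j, N ≤ j → f j = 0) :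
    ∑' j, f j = ∑ j ∈ range N, f j :=
  tsum_eq_sum fun j hj ↦ hf j (by simpa using hj)

/-- Discrete boundary bound: for every finitely supported `v : ℕ → ℝ`,
`v(0)² ≤ 2 (Σ (v(j+1) − v(j))²)^{1/2} (Σ v(j)²)^{1/2}`. -/
theorem stmt_9 (v : ℕ → ℝ) (hv : ∃ N, ∀ j, N ≤ j → v j = 0) :
    v 0 ^ 2 ≤ 2 * Real.sqrt (∑' j : ℕ, (v (j + 1) - v j) ^ 2)
      * Real.sqrt (∑' j : ℕ, v j ^ 2) := by
  obtain ⟨N, hN⟩ := hv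
  rw [tsum_eq_sum_range_of_forall_le_eq_zero (N := N) fun j hj ↦ by
      rw [hN j hj, hN (j + 1) (by omega), sub_zero, zero_pow two_ne_zero],
    tsum_eq_sum_range_of_forall_le_eq_zero (N := N) fun j hj ↦ by
      rw [hN j hj, zero_pow two_ne_zero]]
  exact sq_le_two_mul_sqrt_sum_sq_sub_mul_sqrt_sum_sq v (hN N le_rfl)
end

section
/- For every x₀ ∈ ℝ and every M ≥ 0 there exists R > 0 such that there is no differentiable function r : [x₀, x₀+1] → ℝ satisfying r'(t) = t − (r(t)+M)² for all t ∈ [x₀, x₀+1] and r(x₀) ≤ −R. In other words, solutions of the ODE r' = t − (r+M)² started sufficiently low explode to −∞ before time x₀ + 1. -/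
open Set

/-- Blow-up for the Riccati-type ODE: for every `x₀ ∈ ℝ` and `M ≥ 0`
there is `R > 0` such that no solution of `r' = t − (r+M)²` on `[x₀, x₀+1]` can start at
`r(x₀) ≤ −R`; solutions started sufficiently low explode to `−∞` before time `x₀+1`. -/
theorem stmt_13 : ∀ x₀ M : ℝ, 0 ≤ M → ∃ R > (0:ℝ),
    ¬ ∃ r : ℝ → ℝ,
      (∀ t ∈ Icc x₀ (x₀ + 1),
        HasDerivWithinAt r (t - (r t + M) ^ 2) (Icc x₀ (x₀ + 1)) t) ∧
      r x₀ ≤ -R := by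
  intro x₀ M hM
  -- constants
  set C : ℝ := |x₀| + 1 with hC
  clear_value C
  have hC1 : (1:ℝ) ≤ C := by have := abs_nonneg x₀; rw [hC]; linarith
  set K : ℝ := max 4 (Real.sqrt (2 * C)) with hK
  have hK4 : (4:ℝ) ≤ K := le_max_left _ _
  have hK0 : (0:ℝ) < K := by linarith
  have hK2 : 2 * C ≤ K ^ 2 := by
    have h1 : Real.sqrt (2 * C) ≤ K := le_max_right _ _
    have h2 : (0:ℝ) ≤ 2 * C := by linarith
    calc 2 * C = Real.sqrt (2 * C) ^ 2 := (Real.sq_sqrt h2).symm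
      _ ≤ K ^ 2 := by
        have := Real.sqrt_nonneg (2 * C)
        nlinarith
  clear_value K
  refine ⟨K + M, by linarith, ?_⟩
  rintro ⟨r, hr, hr0⟩
  -- the shifted solution u = r + M
  set u : ℝ → ℝ := fun t => r t + M with hu
  have hu' : ∀ t ∈ Icc x₀ (x₀ + 1),
      HasDerivWithinAt u (t - (u t) ^ 2) (Icc x₀ (x₀ + 1)) t := by
    intro t ht
    rw [hu]
    simpa using (hr t ht).add_const M
  have hu0 : u x₀ ≤ -K := by rw [hu]; simp only; linarith
  clear_value u
  have hucont : ContinuousOn u (Icc x₀ (x₀ + 1)) :=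
    fun t ht => (hu' t ht).continuousWithinAt
  have htle : ∀ t ∈ Icc x₀ (x₀ + 1), t ≤ C := by
    intro t ht
    have h1 := ht.2
    have h2 := le_abs_self x₀
    rw [hC]; linarith
  -- derivative within Ici
  have hu'' : ∀ t ∈ Ico x₀ (x₀ + 1),
      HasDerivWithinAt u (t - (u t) ^ 2) (Ici t) t := by
    intro t ht
    exact (hu' t (Ico_subset_Icc_self ht)).mono_of_mem_nhdsWithin
      (Icc_mem_nhdsGE_of_mem ht)
  -- Step 1: barrier, u t ≤ -K on the whole interval
  have hbar : ∀ t ∈ Icc x₀ (x₀ + 1), u t ≤ -K := by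
    have := image_le_of_deriv_right_lt_deriv_boundary' (f := u)
      (f' := fun t => t - (u t) ^ 2) (a := x₀) (b := x₀ + 1)
      hucont hu'' (B := fun _ => -K) (B' := fun _ => 0) hu0
      continuousOn_const (fun x _ => hasDerivWithinAt_const _ _ _)
      (fun x hx hxK => by
        have hxC : x ≤ C := htle x (Ico_subset_Icc_self hx)
        have hxK' : u x = -K := hxK
        show x - u x ^ 2 < 0
        rw [hxK']
        nlinarith)
    exact fun t ht => this ht
  have huneg : ∀ t ∈ Icc x₀ (x₀ + 1), u t < 0 := fun t ht =>
    lt_of_le_of_lt (hbar t ht) (by linarith)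
  -- Step 2: v = -(u)⁻¹ decreases at rate ≥ 1/2
  set v : ℝ → ℝ := fun t => -(u t)⁻¹ with hv
  have hv' : ∀ t ∈ Ico x₀ (x₀ + 1),
      HasDerivWithinAt v ((t - (u t) ^ 2) / (u t) ^ 2) (Ici t) t := by
    intro t ht
    have hne : u t ≠ 0 := ne_of_lt (huneg t (Ico_subset_Icc_self ht))
    have h := ((hu'' t ht).inv hne).neg
    have heq : -(-(t - u t ^ 2) / u t ^ 2) = (t - u t ^ 2) / u t ^ 2 := by ring
    rw [hv]
    exact heq ▸ h
  have hvcont : ContinuousOn v (Icc x₀ (x₀ + 1)) := by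
    rw [hv]
    exact (ContinuousOn.inv₀ hucont (fun t ht => ne_of_lt (huneg t ht))).neg
  have hvx₀ : v x₀ ≤ 1 / K := by
    have h1 : u x₀ ≤ -K := hu0
    have h2 : u x₀ < 0 := huneg x₀ ⟨le_rfl, by linarith⟩
    rw [hv]
    show -(u x₀)⁻¹ ≤ 1 / K
    have hKle : K ≤ -u x₀ := by linarith
    calc -(u x₀)⁻¹ = (-u x₀)⁻¹ := by rw [inv_neg]
      _ ≤ K⁻¹ := inv_anti₀ hK0 hKle
      _ = 1 / K := (one_div K).symm
  have hvpos : 0 < v (x₀ + 1) := by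
    have h := huneg (x₀ + 1) ⟨by linarith, le_rfl⟩
    rw [hv]
    show 0 < -(u (x₀ + 1))⁻¹
    exact neg_pos.mpr (inv_lt_zero.mpr h)
  clear_value v
  -- fencing: v t ≤ 1/K - (t - x₀)/2
  have hfence : ∀ t ∈ Icc x₀ (x₀ + 1), v t ≤ 1 / K - (t - x₀) / 2 := by
    have := image_le_of_deriv_right_le_deriv_boundary (f := v)
      (f' := fun t => (t - (u t) ^ 2) / (u t) ^ 2) (a := x₀) (b := x₀ + 1)
      hvcont hv' (B := fun t => 1 / K - (t - x₀) / 2) (B' := fun _ => -(1/2))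
      (by simpa using hvx₀)
      (by fun_prop)
      (fun x hx => by
        have h1 : HasDerivWithinAt (fun t : ℝ => (t - x₀) / 2) (1/2) (Ici x) x := by
          simpa using (((hasDerivWithinAt_id x (Ici x)).sub_const x₀).div_const 2)
        simpa using (h1.const_sub (1 / K)))
      (fun x hx => by
        -- bound: (x - u²)/u² ≤ -1/2
        have hxI := Ico_subset_Icc_self hx
        have hxC : x ≤ C := htle x hxI
        have hub : u x ≤ -K := hbar x hxI
        have hK2' : 2 * C ≤ (u x) ^ 2 := by nlinarith
        have hupos : (0:ℝ) < (u x) ^ 2 := by nlinarith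
        show (x - u x ^ 2) / u x ^ 2 ≤ -(1/2)
        rw [div_le_iff₀ hupos]
        nlinarith)
    exact fun t ht => this ht
  -- contradiction at t = x₀ + 1
  have hend : v (x₀ + 1) ≤ 1 / K - 1 / 2 := by
    have := hfence (x₀ + 1) ⟨by linarith, le_rfl⟩
    simpa using this
  have hKhalf : 1 / K < 1 / 2 := by
    rw [div_lt_div_iff₀ hK0 (by norm_num)]
    linarith
  linarith
end

section
/- Let M ∈ ℝ, x₀ < x₁, and let b : [x₀, x₁] → ℝ be continuous with b(t) ≤ M for all t ∈ [x₀, x₁]. Suppose q, r : [x₀, x₁] → ℝ are differentiable with q'(t) = t − (q(t) + b(t))² and r'(t) = t − (r(t) + M)² for all t ∈ [x₀, x₁], that q(x₀) ≤ r(x₀), and that r(t) ≤ −M for all t ∈ [x₀, x₁]. Then q(t) ≤ r(t) for all t ∈ [x₀, x₁]; in particular the paths never cross. -/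
open Set Filter Topology

/-!
The difference `d = q - r` satisfies `d' = (r + M)² - (q + b)²`, and since `q + b ≤ (r + M) + d`
with `r + M ≤ 0`, this is at most `-2 (r + M) d ≤ 2 C d` wherever `d > 0`, with `C` a bound for
`-(r + M)` on the compact interval. A one-sided linear bound `d' ≤ K d` on `{d > 0}` keeps `d ≤ 0`
once `d(x₀) ≤ 0`: compare `d` with the fences `ε e^{(|K| + 1)(t - x₀)}` and let `ε → 0`.
-/

theorem nonpos_of_deriv_right_le_mul_of_pos {f f' : ℝ → ℝ} {a b K : ℝ}
    (hf : ContinuousOn f (Icc a b)) (hf' : ∀ x ∈ Ico a b, HasDerivWithinAt f (f' x) (Ici x) x)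
    (ha : f a ≤ 0) (bound : ∀ x ∈ Ico a b, 0 < f x → f' x ≤ K * f x) :
    ∀ ⦃x⦄, x ∈ Icc a b → f x ≤ 0 := by
  intro x hx
  set L := |K| + 1
  have fence : ∀ ε > 0, f x ≤ ε * Real.exp (L * (x - a)) := by
    intro ε hε
    refine image_le_of_deriv_right_lt_deriv_boundary hf hf'
      (B := fun y ↦ ε * Real.exp (L * (y - a))) (B' := fun y ↦ ε * (Real.exp (L * (y - a)) * L))
      (by simpa using ha.trans hε.le) (fun y ↦ ?_) (fun y hy hfy ↦ ?_) hx
    · exact ((((hasDerivAt_id y).sub_const a).const_mul L).exp.const_mul ε).congr_deriv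
        (by simp)
    · have hpos : 0 < ε * Real.exp (L * (y - a)) := by positivity
      calc f' y ≤ K * f y := bound y hy (hfy ▸ hpos)
        _ < L * f y := by
          rw [hfy]; exact mul_lt_mul_of_pos_right (by linarith [le_abs_self K]) hpos
        _ = ε * (Real.exp (L * (y - a)) * L) := by rw [hfy]; ring
  have hlim : Tendsto (fun ε ↦ ε * Real.exp (L * (x - a))) (𝓝[>] 0) (𝓝 0) :=
    tendsto_nhdsWithin_of_tendsto_nhds ((continuous_mul_const _).tendsto' 0 0 (zero_mul _))
  exact ge_of_tendsto hlim (eventually_nhdsWithin_of_forall fence)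

theorem sq_sub_sq_le_of_le_add {c d u : ℝ} (hc : c ≤ 0) (hd : 0 ≤ d) (hu : u ≤ c + d) :
    c ^ 2 - u ^ 2 ≤ -2 * c * d := by
  rcases le_or_gt (c + d) 0 with h | h
  · nlinarith
  · nlinarith [sq_nonneg u]

theorem stmt_14_general (M x₀ x₁ : ℝ) (b q r : ℝ → ℝ)
    (hbM : ∀ t ∈ Icc x₀ x₁, b t ≤ M)
    (hq : ∀ t ∈ Icc x₀ x₁, HasDerivWithinAt q (t - (q t + b t) ^ 2) (Icc x₀ x₁) t)
    (hr : ∀ t ∈ Icc x₀ x₁, HasDerivWithinAt r (t - (r t + M) ^ 2) (Icc x₀ x₁) t)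
    (h0 : q x₀ ≤ r x₀) (hrM : ∀ t ∈ Icc x₀ x₁, r t ≤ -M) :
    ∀ t ∈ Icc x₀ x₁, q t ≤ r t := by
  have hd : ∀ t ∈ Icc x₀ x₁, HasDerivWithinAt (q - r)
      ((r t + M) ^ 2 - (q t + b t) ^ 2) (Icc x₀ x₁) t := fun t ht ↦
    ((hq t ht).sub (hr t ht)).congr_deriv (by ring)
  obtain ⟨C, hC⟩ : BddAbove ((fun t ↦ -(r t + M)) '' Icc x₀ x₁) :=
    isCompact_Icc.bddAbove_image fun t ht ↦ ((hr t ht).continuousWithinAt.add_const M).neg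
  have key := nonpos_of_deriv_right_le_mul_of_pos (K := 2 * C)
    (fun t ht ↦ (hd t ht).continuousWithinAt)
    (fun t ht ↦ (hd t (Ico_subset_Icc_self ht)).mono_of_mem_nhdsWithin
      (Icc_mem_nhdsGE_of_mem ht)) (sub_nonpos.2 h0) fun t ht hpos ↦ by
    have ht' := Ico_subset_Icc_self ht
    have hC' : -(r t + M) ≤ C := hC (mem_image_of_mem _ ht')
    calc (r t + M) ^ 2 - (q t + b t) ^ 2 ≤ -2 * (r t + M) * (q - r) t :=
          sq_sub_sq_le_of_le_add (by linarith [hrM t ht']) hpos.le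
            (by simp only [Pi.sub_apply]; linarith [hbM t ht'])
      _ ≤ 2 * C * (q - r) t := by nlinarith
  exact fun t ht ↦ sub_nonpos.1 (key ht)

/-- ODE comparison (no crossing): if `q' = t − (q+b)²` with `b ≤ M`,
`r' = t − (r+M)²` with `r ≤ −M` on `[x₀,x₁]`, and `q(x₀) ≤ r(x₀)`, then `q ≤ r` on
`[x₀,x₁]`. -/
theorem stmt_14 (M x₀ x₁ : ℝ) (hx : x₀ < x₁) (b q r : ℝ → ℝ)
    (hb : ContinuousOn b (Icc x₀ x₁)) (hbM : ∀ t ∈ Icc x₀ x₁, b t ≤ M)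
    (hq : ∀ t ∈ Icc x₀ x₁, HasDerivWithinAt q (t - (q t + b t) ^ 2) (Icc x₀ x₁) t)
    (hr : ∀ t ∈ Icc x₀ x₁, HasDerivWithinAt r (t - (r t + M) ^ 2) (Icc x₀ x₁) t)
    (h0 : q x₀ ≤ r x₀) (hrM : ∀ t ∈ Icc x₀ x₁, r t ≤ -M) :
    ∀ t ∈ Icc x₀ x₁, q t ≤ r t :=
  stmt_14_general M x₀ x₁ b q r hbM hq hr h0 hrM
end

section
/- Let u : ℝ → ℝ be twice differentiable and satisfy the homogeneous Painlevé II equation u''(x) = 2u(x)³ + x·u(x) for all x ∈ ℝ. Assume ∫ₓ^∞ u(t)² dt < ∞ for every x, and that u(x) → 0, u'(x) → 0 and x·u(x)² → 0 as x → +∞. Then for every x ∈ ℝ, u'(x)² = u(x)⁴ + x·u(x)² + ∫ₓ^∞ u(t)² dt; equivalently, with v(x) = ∫ₓ^∞ u², the quantity v(x) + u(x)⁴ − u'(x)² + x·u(x)² is identically zero. -/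
open MeasureTheory Set Filter

/-! Along a solution of `u'' = 2u³ + xu`, the energy `E = u⁴ + xu² − u'²` has `E' = u²`: the
terms `4u³u'` and `2xuu'` cancel against `2u'u''`, leaving only the explicit `x`-dependence. The
hypotheses at `+∞` force `E → 0`, so `∫ₓ^∞ u² = 0 − E(x)` by the fundamental theorem of calculus
on a half-line. -/

namespace PainleveII

def energy (u u' : ℝ → ℝ) (x : ℝ) : ℝ := u x ^ 4 + x * u x ^ 2 - u' x ^ 2

theorem hasDerivAt_energy {u u' : ℝ → ℝ} {x : ℝ} (hu : HasDerivAt u (u' x) x)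
    (hu'' : HasDerivAt u' (2 * u x ^ 3 + x * u x) x) :
    HasDerivAt (energy u u') (u x ^ 2) x := by
  have h := ((hu.pow 4).add ((hasDerivAt_id' x).mul (hu.pow 2))).sub (hu''.pow 2)
  exact h.congr_deriv (by simp only [Pi.pow_apply]; ring)

theorem tendsto_energy_atTop {u u' : ℝ → ℝ} (hu : Tendsto u atTop (nhds 0))
    (hu' : Tendsto u' atTop (nhds 0)) (hxu : Tendsto (fun x => x * u x ^ 2) atTop (nhds 0)) :
    Tendsto (energy u u') atTop (nhds 0) := by
  have h := ((hu.pow 4).add hxu).sub (hu'.pow 2)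
  norm_num at h
  exact h

end PainleveII

/-- First integral for Painlevé II: if `u'' = 2u³ + xu` and `u`, `u'`,
`x·u²` all tend to `0` at `+∞` with `∫ₓ^∞ u² < ∞`, then
`u'(x)² = u(x)⁴ + x·u(x)² + ∫ₓ^∞ u²` for every `x`; equivalently
`v + u⁴ − u'² + xu² ≡ 0` where `v(x) = ∫ₓ^∞ u²`. -/
theorem stmt_15 (u u' : ℝ → ℝ)
    (hu : ∀ x, HasDerivAt u (u' x) x)
    (hu'' : ∀ x, HasDerivAt u' (2 * u x ^ 3 + x * u x) x)
    (hint : ∀ x : ℝ, Integrable (fun t => u t ^ 2) (volume.restrict (Ioi x)))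
    (h1 : Tendsto u atTop (nhds 0))
    (h2 : Tendsto u' atTop (nhds 0))
    (h3 : Tendsto (fun x => x * u x ^ 2) atTop (nhds 0)) :
    ∀ x : ℝ, u' x ^ 2 = u x ^ 4 + x * u x ^ 2 + ∫ t in Ioi x, u t ^ 2 := by
  intro x
  have hftc : ∫ t in Ioi x, u t ^ 2 = 0 - PainleveII.energy u u' x :=
    integral_Ioi_of_hasDerivAt_of_tendsto'
      (fun y _ => PainleveII.hasDerivAt_energy (hu y) (hu'' y)) (hint x)
      (PainleveII.tendsto_energy_atTop h1 h2 h3)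
  rw [hftc, PainleveII.energy]
  ring
end

section
/- Then the function F̃(x,w) := f(x,w)·F(x) satisfies the linear PDE ∂F̃/∂x + ∂²F̃/∂w² + (x − w²)·∂F̃/∂w = 0 at every point (x,w) ∈ ℝ². (This is the PDE from the β = 2 characterization of the deformed Tracy–Widom laws, satisfied by the Painlevé II expression f(x,w)F(x).) -/
open MeasureTheory Set Filter

/-!
Differentiating the `w`-equation of the Lax pair once more and eliminating `g'` gives
`f'' + (x - w²) f' = (u⁴ - u'² + x u²) f - u g` in the `w`-variable, while the `x`-equation and
`F' = vF` give `∂ₓ(fF) = (u g + v f) F`. Adding the two, the `g`-terms cancel and the coefficient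
of `f F` is the first integral `v + u⁴ - u'² + x u²`, which vanishes.
-/

namespace LaxPair

variable {φ ψ : ℝ → ℝ} {x p q : ℝ}

/-- The `w`-half of the Lax pair at a fixed `x`, with `p = u x` and `q = u' x`. -/
theorem deriv_deriv_add_mul_deriv
    (hφ : ∀ w, HasDerivAt φ (p ^ 2 * φ w - (w * p + q) * ψ w) w)
    (hψ : ∀ w, HasDerivAt ψ ((-w * p + q) * φ w + (w ^ 2 - x - p ^ 2) * ψ w) w) (w : ℝ) :
    deriv (deriv φ) w + (x - w ^ 2) * deriv φ w
      = (p ^ 4 - q ^ 2 + x * p ^ 2) * φ w - p * ψ w := by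
  have hφ' : HasDerivAt (fun w => p ^ 2 * φ w - (w * p + q) * ψ w)
      (p ^ 2 * (p ^ 2 * φ w - (w * p + q) * ψ w)
        - (1 * p * ψ w + (w * p + q) * ((-w * p + q) * φ w + (w ^ 2 - x - p ^ 2) * ψ w))) w :=
    ((hφ w).const_mul _).sub ((((hasDerivAt_id w).mul_const p).add_const q).mul (hψ w))
  rw [deriv_eq hφ, hφ'.deriv]
  ring

end LaxPair

theorem stmt_16_general (u u' v F : ℝ → ℝ) (f g : ℝ → ℝ → ℝ)
    (hfi : ∀ x : ℝ, v x + u x ^ 4 - u' x ^ 2 + x * u x ^ 2 = 0)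
    (hF : ∀ x, HasDerivAt F (v x * F x) x)
    (hfw : ∀ x w : ℝ, HasDerivAt (fun w' => f x w')
      (u x ^ 2 * f x w - (w * u x + u' x) * g x w) w)
    (hgw : ∀ x w : ℝ, HasDerivAt (fun w' => g x w')
      ((-w * u x + u' x) * f x w + (w ^ 2 - x - u x ^ 2) * g x w) w)
    (hfx : ∀ x w : ℝ, HasDerivAt (fun x' => f x' w) (u x * g x w) x) :
    ∀ x w : ℝ,
      deriv (fun x' => f x' w * F x') x
      + deriv (fun w' => deriv (fun w'' => f x w'' * F x) w') w
      + (x - w ^ 2) * deriv (fun w' => f x w' * F x) w = 0 := by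
  intro x w
  have hx : deriv (fun x' => f x' w * F x') x = (u x * g x w + v x * f x w) * F x := by
    have hfF : HasDerivAt (fun x' => f x' w * F x') (u x * g x w * F x + f x w * (v x * F x)) x :=
      (hfx x w).mul (hF x)
    rw [hfF.deriv]
    ring
  have hw : deriv (fun w' => deriv (fun w'' => f x w'' * F x) w') w
      + (x - w ^ 2) * deriv (fun w' => f x w' * F x) w
      = ((u x ^ 4 - u' x ^ 2 + x * u x ^ 2) * f x w - u x * g x w) * F x := by
    rw [deriv_mul_const_field', deriv_mul_const_field,
      ← LaxPair.deriv_deriv_add_mul_deriv (hfw x) (hgw x) w]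
    ring
  rw [add_assoc, hx, hw]
  linear_combination f x w * F x * hfi x

/-- The Painlevé II expression `F̃(x,w) = f(x,w)·F(x)` built from the
Lax pair solution `(f,g)` and `F' = vF` satisfies the `β = 2` PDE
`∂F̃/∂x + ∂²F̃/∂w² + (x − w²)∂F̃/∂w = 0` on all of `ℝ²`. -/
theorem stmt_16 (u u' v F : ℝ → ℝ) (f g : ℝ → ℝ → ℝ)
    (hu : ∀ x, HasDerivAt u (u' x) x) (hu'c : Continuous u')
    (hvint : ∀ x : ℝ, Integrable (fun t => u t ^ 2) (volume.restrict (Ioi x)))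
    (hv : ∀ x : ℝ, v x = ∫ t in Ioi x, u t ^ 2)
    (hfi : ∀ x : ℝ, v x + u x ^ 4 - u' x ^ 2 + x * u x ^ 2 = 0)
    (hF : ∀ x, HasDerivAt F (v x * F x) x)
    (hfw : ∀ x w : ℝ, HasDerivAt (fun w' => f x w')
      (u x ^ 2 * f x w - (w * u x + u' x) * g x w) w)
    (hgw : ∀ x w : ℝ, HasDerivAt (fun w' => g x w')
      ((-w * u x + u' x) * f x w + (w ^ 2 - x - u x ^ 2) * g x w) w)
    (hfx : ∀ x w : ℝ, HasDerivAt (fun x' => f x' w) (u x * g x w) x)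
    (hgx : ∀ x w : ℝ, HasDerivAt (fun x' => g x' w) (u x * f x w - w * g x w) x) :
    ∀ x w : ℝ,
      deriv (fun x' => f x' w * F x') x
      + deriv (fun w' => deriv (fun w'' => f x w'' * F x) w') w
      + (x - w ^ 2) * deriv (fun w' => f x w' * F x) w = 0 :=
  stmt_16_general u u' v F f g hfi hF hfw hgw hfx
end

section
/- Then the function F̃₄(x,w) := [ ((f+g)·E^{−1/2} + (f−g)·E^{1/2})/2 · F^{1/2} ] evaluated at the point (2^{2/3} x, 2^{1/3} w) satisfies the linear PDE ∂F̃₄/∂x + (1/2)·∂²F̃₄/∂w² + (x − w²)·∂F̃₄/∂w = 0 at every point (x,w) ∈ ℝ². (This is the PDE from the β = 4 characterization of the deformed Tracy–Widom laws, satisfied by the Painlevé II expression for F_{4,w}.) -/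
open MeasureTheory Set Filter

/-!
Write `L = 2 ∂ₓ + ∂²_w + (x - w²) ∂_w`. The Lax pair together with the first integral
`v + u⁴ - u'² + x u² = 0` gives `L (f ± g) = (± u - v) (f ± g)`. Multiplying by `m(x)` with
`m' = k m` adds `2k` to such a potential, so the factors `E^{∓1/2} F^{1/2}` (for which
`k = ∓u/2 + v/2`) cancel it, and `L` annihilates the unscaled expression. Since `(2^{1/3})³ = 2`,
the substitution `(x, w) ↦ (2^{2/3} x, 2^{1/3} w)` turns the operator of the theorem into
`2^{-1/3} L`.
-/
def SolvesWithPotential (c : ℝ → ℝ) (h : ℝ → ℝ → ℝ) : Prop :=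
  ∃ hx hw hww : ℝ → ℝ → ℝ, (∀ x w, HasDerivAt (fun x' => h x' w) (hx x w) x) ∧
    (∀ x w, HasDerivAt (h x) (hw x w) w) ∧ (∀ x w, HasDerivAt (hw x) (hww x w) w) ∧
    ∀ x w, 2 * hx x w + hww x w + (x - w ^ 2) * hw x w = c x * h x w

namespace SolvesWithPotential

variable {c : ℝ → ℝ} {h : ℝ → ℝ → ℝ}

theorem deriv_eq (hh : SolvesWithPotential c h) (x w : ℝ) :
    2 * deriv (fun x' => h x' w) x + deriv (deriv (h x)) w + (x - w ^ 2) * deriv (h x) w =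
      c x * h x w := by
  obtain ⟨hx, hw, hww, hhx, hhw, hhww, heq⟩ := hh
  have hderiv : deriv (h x) = hw x := funext fun w => (hhw x w).deriv
  rw [(hhx x w).deriv, hderiv, (hhww x w).deriv, heq]

theorem add {h' : ℝ → ℝ → ℝ} (hh : SolvesWithPotential c h) (hh' : SolvesWithPotential c h') :
    SolvesWithPotential c (fun x w => h x w + h' x w) := by
  obtain ⟨hx, hw, hww, hhx, hhw, hhww, heq⟩ := hh
  obtain ⟨hx', hw', hww', hhx', hhw', hhww', heq'⟩ := hh'
  refine ⟨fun x w => hx x w + hx' x w, fun x w => hw x w + hw' x w,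
    fun x w => hww x w + hww' x w, fun x w => (hhx x w).add (hhx' x w),
    fun x w => (hhw x w).add (hhw' x w), fun x w => (hhww x w).add (hhww' x w), fun x w => ?_⟩
  linear_combination heq x w + heq' x w

theorem const_mul (a : ℝ) (hh : SolvesWithPotential c h) :
    SolvesWithPotential c (fun x w => a * h x w) := by
  obtain ⟨hx, hw, hww, hhx, hhw, hhww, heq⟩ := hh
  refine ⟨fun x w => a * hx x w, fun x w => a * hw x w, fun x w => a * hww x w,
    fun x w => (hhx x w).const_mul a, fun x w => (hhw x w).const_mul a,
    fun x w => (hhww x w).const_mul a, fun x w => ?_⟩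
  linear_combination a * heq x w

theorem mul_left {m k c' : ℝ → ℝ} (hm : ∀ x, HasDerivAt m (k x * m x) x)
    (hc' : ∀ x, 2 * k x + c x = c' x) (hh : SolvesWithPotential c h) :
    SolvesWithPotential c' (fun x w => m x * h x w) := by
  obtain ⟨hx, hw, hww, hhx, hhw, hhww, heq⟩ := hh
  refine ⟨fun x w => k x * m x * h x w + m x * hx x w, fun x w => m x * hw x w,
    fun x w => m x * hww x w, fun x w => (hm x).mul (hhx x w),
    fun x w => (hhw x w).const_mul (m x), fun x w => (hhww x w).const_mul (m x), fun x w => ?_⟩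
  rw [← hc']
  linear_combination m x * heq x w

end SolvesWithPotential

section LogDeriv

variable {m : ℝ → ℝ} {k x : ℝ}

theorem HasDerivAt.sqrt_of_logDeriv (hm : HasDerivAt m (k * m x) x) (hpos : 0 < m x) :
    HasDerivAt (fun y => √(m y)) (k / 2 * √(m x)) x := by
  convert hm.sqrt hpos.ne' using 1
  rw [eq_div_iff (by positivity)]
  linear_combination k * Real.sq_sqrt hpos.le

theorem HasDerivAt.inv_of_logDeriv (hm : HasDerivAt m (k * m x) x) (hne : m x ≠ 0) :
    HasDerivAt (fun y => (m y)⁻¹) (-k * (m x)⁻¹) x :=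
  (hm.fun_inv hne).congr_deriv (by field_simp)

end LogDeriv

section LaxPair

variable {u u' v : ℝ → ℝ} {f g : ℝ → ℝ → ℝ}

theorem solvesWithPotential_lax
    (hfw : ∀ x w : ℝ, HasDerivAt (fun w' => f x w')
      (u x ^ 2 * f x w - (w * u x + u' x) * g x w) w)
    (hgw : ∀ x w : ℝ, HasDerivAt (fun w' => g x w')
      ((-w * u x + u' x) * f x w + (w ^ 2 - x - u x ^ 2) * g x w) w)
    (hfx : ∀ x w : ℝ, HasDerivAt (fun x' => f x' w) (u x * g x w) x)
    (hgx : ∀ x w : ℝ, HasDerivAt (fun x' => g x' w) (u x * f x w - w * g x w) x)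
    (hfi : ∀ x : ℝ, v x + u x ^ 4 - u' x ^ 2 + x * u x ^ 2 = 0) {σ : ℝ} (hσ : σ ^ 2 = 1) :
    SolvesWithPotential (fun x => σ * u x - v x) (fun x w => f x w + σ * g x w) := by
  have hww : ∀ x w, HasDerivAt (fun w' => u x ^ 2 * f x w' - (w' * u x + u' x) * g x w' +
      σ * ((-w' * u x + u' x) * f x w' + (w' ^ 2 - x - u x ^ 2) * g x w'))
      (u x ^ 2 * (u x ^ 2 * f x w - (w * u x + u' x) * g x w)
        - (u x * g x w + (w * u x + u' x)
          * ((-w * u x + u' x) * f x w + (w ^ 2 - x - u x ^ 2) * g x w))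
        + σ * (-u x * f x w + (-w * u x + u' x) * (u x ^ 2 * f x w - (w * u x + u' x) * g x w)
          + (2 * w * g x w + (w ^ 2 - x - u x ^ 2)
            * ((-w * u x + u' x) * f x w + (w ^ 2 - x - u x ^ 2) * g x w)))) w := by
    intro x w
    have hlin : HasDerivAt (fun w' : ℝ => w' * u x + u' x) (u x) w := by
      simpa using ((hasDerivAt_id w).mul_const (u x)).add_const (u' x)
    have hlin' : HasDerivAt (fun w' : ℝ => -w' * u x + u' x) (-u x) w := by
      simpa using ((hasDerivAt_id w).neg.mul_const (u x)).add_const (u' x)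
    have hquad : HasDerivAt (fun w' : ℝ => w' ^ 2 - x - u x ^ 2) (2 * w) w := by
      simpa using (((hasDerivAt_id w).pow 2).sub_const x).sub_const (u x ^ 2)
    exact (((hfw x w).const_mul _).sub (hlin.mul (hgw x w))).add
      (((hlin'.mul (hfw x w)).add (hquad.mul (hgw x w))).const_mul σ)
  refine ⟨fun x w => u x * g x w + σ * (u x * f x w - w * g x w), _, _,
    fun x w => (hfx x w).add ((hgx x w).const_mul σ),
    fun x w => (hfw x w).add ((hgw x w).const_mul σ), hww, fun x w => ?_⟩
  linear_combination (f x w + σ * g x w) * hfi x - u x * g x w * hσ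

theorem solvesWithPotential_zero_of_lax {E F : ℝ → ℝ}
    (hfw : ∀ x w : ℝ, HasDerivAt (fun w' => f x w')
      (u x ^ 2 * f x w - (w * u x + u' x) * g x w) w)
    (hgw : ∀ x w : ℝ, HasDerivAt (fun w' => g x w')
      ((-w * u x + u' x) * f x w + (w ^ 2 - x - u x ^ 2) * g x w) w)
    (hfx : ∀ x w : ℝ, HasDerivAt (fun x' => f x' w) (u x * g x w) x)
    (hgx : ∀ x w : ℝ, HasDerivAt (fun x' => g x' w) (u x * f x w - w * g x w) x)
    (hfi : ∀ x : ℝ, v x + u x ^ 4 - u' x ^ 2 + x * u x ^ 2 = 0)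
    (hEpos : ∀ x, 0 < E x) (hFpos : ∀ x, 0 < F x)
    (hE : ∀ x, HasDerivAt E (u x * E x) x) (hF : ∀ x, HasDerivAt F (v x * F x) x) :
    SolvesWithPotential 0 (fun x w =>
      ((f x w + g x w) / √(E x) + (f x w - g x w) * √(E x)) / 2 * √(F x)) := by
  have hsqrtE x := (hE x).sqrt_of_logDeriv (hEpos x)
  have hsqrtF x := (hF x).sqrt_of_logDeriv (hFpos x)
  have hinvSqrtE x := (hsqrtE x).inv_of_logDeriv (Real.sqrt_pos.2 (hEpos x)).ne'
  have hplus := ((solvesWithPotential_lax hfw hgw hfx hgx hfi (one_pow 2)).mul_left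
    hinvSqrtE (c' := fun x => -v x) fun x => by ring).mul_left
    hsqrtF (c' := 0) fun x => by rw [Pi.zero_apply]; ring
  have hminus := ((solvesWithPotential_lax hfw hgw hfx hgx hfi (σ := -1) (by norm_num)).mul_left
    hsqrtE (c' := fun x => -v x) fun x => by ring).mul_left
    hsqrtF (c' := 0) fun x => by rw [Pi.zero_apply]; ring
  convert (hplus.add hminus).const_mul (1 / 2) using 1
  funext x w
  ring

end LaxPair

theorem SolvesWithPotential.rescale {G : ℝ → ℝ → ℝ} (hG : SolvesWithPotential 0 G) {B : ℝ}
    (hB : B ^ 3 = 2) (x w : ℝ) :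
    deriv (fun x' => G (B ^ 2 * x') (B * w)) x
      + (1 / 2) * deriv (fun w' => deriv (fun w'' => G (B ^ 2 * x) (B * w'')) w') w
      + (x - w ^ 2) * deriv (fun w' => G (B ^ 2 * x) (B * w')) w = 0 := by
  have hPDE := hG.deriv_eq (B ^ 2 * x) (B * w)
  rw [Pi.zero_apply, zero_mul] at hPDE
  have hx := deriv_comp_mul_left (B ^ 2) (fun X => G X (B * w)) x
  have hw := deriv_comp_mul_left B (G (B ^ 2 * x))
  simp only [smul_eq_mul] at hx hw
  simp only [hx, hw, deriv_const_mul_field', deriv_comp_mul_left B (deriv (G (B ^ 2 * x))),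
    smul_eq_mul]
  linear_combination
    B ^ 2 / 2 * hPDE - (x - w ^ 2) * B / 2 * deriv (G (B ^ 2 * x)) (B * w) * hB

theorem stmt_17_general (u u' v E F : ℝ → ℝ) (f g : ℝ → ℝ → ℝ)
    (hfi : ∀ x : ℝ, v x + u x ^ 4 - u' x ^ 2 + x * u x ^ 2 = 0)
    (hEpos : ∀ x, 0 < E x) (hFpos : ∀ x, 0 < F x)
    (hE : ∀ x, HasDerivAt E (u x * E x) x)
    (hF : ∀ x, HasDerivAt F (v x * F x) x)
    (hfw : ∀ x w : ℝ, HasDerivAt (fun w' => f x w')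
      (u x ^ 2 * f x w - (w * u x + u' x) * g x w) w)
    (hgw : ∀ x w : ℝ, HasDerivAt (fun w' => g x w')
      ((-w * u x + u' x) * f x w + (w ^ 2 - x - u x ^ 2) * g x w) w)
    (hfx : ∀ x w : ℝ, HasDerivAt (fun x' => f x' w) (u x * g x w) x)
    (hgx : ∀ x w : ℝ, HasDerivAt (fun x' => g x' w) (u x * f x w - w * g x w) x)
    (F4 : ℝ → ℝ → ℝ)
    (hF4 : ∀ x w : ℝ, F4 x w =
      ((f (2 ^ ((2:ℝ)/3) * x) (2 ^ ((1:ℝ)/3) * w) + g (2 ^ ((2:ℝ)/3) * x) (2 ^ ((1:ℝ)/3) * w))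
          / Real.sqrt (E (2 ^ ((2:ℝ)/3) * x))
        + (f (2 ^ ((2:ℝ)/3) * x) (2 ^ ((1:ℝ)/3) * w) - g (2 ^ ((2:ℝ)/3) * x) (2 ^ ((1:ℝ)/3) * w))
          * Real.sqrt (E (2 ^ ((2:ℝ)/3) * x))) / 2
        * Real.sqrt (F (2 ^ ((2:ℝ)/3) * x))) :
    ∀ x w : ℝ,
      deriv (fun x' => F4 x' w) x
      + (1 / 2) * deriv (fun w' => deriv (fun w'' => F4 x w'') w') w
      + (x - w ^ 2) * deriv (fun w' => F4 x w') w = 0 := by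
  have hB3 : ((2 : ℝ) ^ ((1 : ℝ) / 3)) ^ 3 = 2 := by
    rw [← Real.rpow_natCast, ← Real.rpow_mul zero_le_two]
    norm_num
  have hB2 : (2 : ℝ) ^ ((2 : ℝ) / 3) = ((2 : ℝ) ^ ((1 : ℝ) / 3)) ^ 2 := by
    rw [← Real.rpow_natCast, ← Real.rpow_mul zero_le_two]
    norm_num
  have hG := solvesWithPotential_zero_of_lax hfw hgw hfx hgx hfi hEpos hFpos hE hF
  obtain rfl : F4 = fun x w =>
      (fun X W => ((f X W + g X W) / √(E X) + (f X W - g X W) * √(E X)) / 2 * √(F X))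
        ((2 ^ ((1 : ℝ) / 3)) ^ 2 * x) (2 ^ ((1 : ℝ) / 3) * w) := by
    funext x w
    rw [hF4, hB2]
  exact hG.rescale hB3

/-- The Painlevé II expression
`F̃₄(x,w) = [((f+g)E^{−1/2} + (f−g)E^{1/2})/2 · F^{1/2}]` evaluated at
`(2^{2/3}x, 2^{1/3}w)` satisfies the `β = 4` PDE
`∂F̃₄/∂x + (1/2)∂²F̃₄/∂w² + (x − w²)∂F̃₄/∂w = 0` on all of `ℝ²`. -/
theorem stmt_17 (u u' v E F : ℝ → ℝ) (f g : ℝ → ℝ → ℝ)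
    (hu : ∀ x, HasDerivAt u (u' x) x) (hu'c : Continuous u')
    (hvint : ∀ x : ℝ, Integrable (fun t => u t ^ 2) (volume.restrict (Ioi x)))
    (hv : ∀ x : ℝ, v x = ∫ t in Ioi x, u t ^ 2)
    (hfi : ∀ x : ℝ, v x + u x ^ 4 - u' x ^ 2 + x * u x ^ 2 = 0)
    (hEpos : ∀ x, 0 < E x) (hFpos : ∀ x, 0 < F x)
    (hE : ∀ x, HasDerivAt E (u x * E x) x)
    (hF : ∀ x, HasDerivAt F (v x * F x) x)
    (hfw : ∀ x w : ℝ, HasDerivAt (fun w' => f x w')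
      (u x ^ 2 * f x w - (w * u x + u' x) * g x w) w)
    (hgw : ∀ x w : ℝ, HasDerivAt (fun w' => g x w')
      ((-w * u x + u' x) * f x w + (w ^ 2 - x - u x ^ 2) * g x w) w)
    (hfx : ∀ x w : ℝ, HasDerivAt (fun x' => f x' w) (u x * g x w) x)
    (hgx : ∀ x w : ℝ, HasDerivAt (fun x' => g x' w) (u x * f x w - w * g x w) x)
    (F4 : ℝ → ℝ → ℝ)
    (hF4 : ∀ x w : ℝ, F4 x w =
      ((f (2 ^ ((2:ℝ)/3) * x) (2 ^ ((1:ℝ)/3) * w) + g (2 ^ ((2:ℝ)/3) * x) (2 ^ ((1:ℝ)/3) * w))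
          / Real.sqrt (E (2 ^ ((2:ℝ)/3) * x))
        + (f (2 ^ ((2:ℝ)/3) * x) (2 ^ ((1:ℝ)/3) * w) - g (2 ^ ((2:ℝ)/3) * x) (2 ^ ((1:ℝ)/3) * w))
          * Real.sqrt (E (2 ^ ((2:ℝ)/3) * x))) / 2
        * Real.sqrt (F (2 ^ ((2:ℝ)/3) * x))) :
    ∀ x w : ℝ,
      deriv (fun x' => F4 x' w) x
      + (1 / 2) * deriv (fun w' => deriv (fun w'' => F4 x w'') w') w
      + (x - w ^ 2) * deriv (fun w' => F4 x w') w = 0 :=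
  stmt_17_general u u' v E F f g hfi hEpos hFpos hE hF hfw hgw hfx hgx F4 hF4
end

section
/- Let u : ℝ → ℝ be continuous with u(x) > 0 for all x, and let w ∈ ℝ. Let f, g : ℝ → ℝ be differentiable with f'(x) = u(x)·g(x) and g'(x) = u(x)·f(x) − w·g(x) for all x ∈ ℝ. Suppose there exists x₀ ∈ ℝ with f(x) > 0 and g(x) > 0 for all x ≤ x₀. Then f(x) > 0 and g(x) > 0 for all x ∈ ℝ. -/
/-!
Let `t` be the first point where `f` or `g` fails to be positive. On `(-∞, t)` both are
positive, so `f' = u g > 0` and, with the integrating factor `e^{w x}`,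
`(e^{w x} g)' = e^{w x} u f > 0`. Hence `f` and `e^{w x} g` increase up to `t`, so both `f t`
and `g t` are positive, contradicting the choice of `t`.
-/

open Set

theorem IsClosed.exists_forall_lt_notMem_of_forall_le_notMem {S : Set ℝ} (hS : IsClosed S)
    (hne : S.Nonempty) {x₀ : ℝ} (h0 : ∀ x ≤ x₀, x ∉ S) :
    ∃ t ∈ S, x₀ < t ∧ ∀ y < t, y ∉ S := by
  have hbdd : BddBelow S := ⟨x₀, fun y hy => le_of_not_ge fun hyx => h0 y hyx hy⟩
  refine ⟨sInf S, hS.csInf_mem hne hbdd, ?_, fun y hy hyS => (csInf_le hbdd hyS).not_gt hy⟩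
  exact lt_of_not_ge fun ht => h0 _ ht (hS.csInf_mem hne hbdd)

theorem le_of_hasDerivAt_of_nonneg_Ioo {F F' : ℝ → ℝ} {a b : ℝ} (hab : a ≤ b)
    (hF : ∀ x, HasDerivAt F (F' x) x) (hF' : ∀ x ∈ Ioo a b, 0 ≤ F' x) : F a ≤ F b := by
  have hmono : MonotoneOn F (Icc a b) := by
    refine monotoneOn_of_hasDerivWithinAt_nonneg (convex_Icc a b)
      (fun x _ => (hF x).continuousAt.continuousWithinAt)
      (fun x _ => (hF x).hasDerivWithinAt) ?_
    simpa only [interior_Icc] using hF'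
  exact hmono (left_mem_Icc.2 hab) (right_mem_Icc.2 hab) hab

theorem HasDerivAt.exp_mul_of_hasDerivAt_sub_mul {g : ℝ → ℝ} {a w x : ℝ}
    (hg : HasDerivAt g (a - w * g x) x) :
    HasDerivAt (fun y => Real.exp (w * y) * g y) (Real.exp (w * x) * a) x := by
  have he : HasDerivAt (fun y => Real.exp (w * y)) (Real.exp (w * x) * (w * 1)) x :=
    ((hasDerivAt_id x).const_mul w).exp
  exact (he.mul hg).congr_deriv (by ring)

theorem stmt_18_general (u f g : ℝ → ℝ) (hupos : ∀ x, 0 < u x) (w : ℝ)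
    (hf : ∀ x, HasDerivAt f (u x * g x) x)
    (hg : ∀ x, HasDerivAt g (u x * f x - w * g x) x)
    (x₀ : ℝ) (h0 : ∀ x ≤ x₀, 0 < f x ∧ 0 < g x) :
    ∀ x : ℝ, 0 < f x ∧ 0 < g x := by
  have hf_cont : Continuous f := continuous_iff_continuousAt.2 fun x => (hf x).continuousAt
  have hg_cont : Continuous g := continuous_iff_continuousAt.2 fun x => (hg x).continuousAt
  set S : Set ℝ := ({y | 0 < f y} ∩ {y | 0 < g y})ᶜ
  have hS : IsClosed S :=
    ((isOpen_lt continuous_const hf_cont).inter (isOpen_lt continuous_const hg_cont)).isClosed_compl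
  intro x
  by_contra hx
  obtain ⟨t, htS, hx₀t, hpos⟩ :=
    hS.exists_forall_lt_notMem_of_forall_le_notMem ⟨x, hx⟩ fun y hy hyS => hyS (h0 y hy)
  have hpos' : ∀ y ∈ Ioo x₀ t, 0 < f y ∧ 0 < g y := fun y hy => not_not.1 (hpos y hy.2)
  have hft : f x₀ ≤ f t := le_of_hasDerivAt_of_nonneg_Ioo hx₀t.le hf fun y hy =>
    (mul_pos (hupos y) (hpos' y hy).2).le
  have hgt : Real.exp (w * x₀) * g x₀ ≤ Real.exp (w * t) * g t :=
    le_of_hasDerivAt_of_nonneg_Ioo hx₀t.le (fun y => (hg y).exp_mul_of_hasDerivAt_sub_mul)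
      fun y hy => (mul_pos (Real.exp_pos _) (mul_pos (hupos y) (hpos' y hy).1)).le
  obtain ⟨hfx₀, hgx₀⟩ := h0 x₀ le_rfl
  exact htS ⟨hfx₀.trans_le hft, pos_of_mul_pos_right
    ((mul_pos (Real.exp_pos _) hgx₀).trans_le hgt) (Real.exp_pos _).le⟩

/-- Positivity propagation for the `x`-equation of the Painlevé II Lax
pair: if `f' = u g`, `g' = u f − w g` with `u > 0` everywhere and `f, g > 0` on some
`(−∞, x₀]`, then `f > 0` and `g > 0` on all of `ℝ`. -/
theorem stmt_18 (u f g : ℝ → ℝ) (hu : Continuous u) (hupos : ∀ x, 0 < u x) (w : ℝ)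
    (hf : ∀ x, HasDerivAt f (u x * g x) x)
    (hg : ∀ x, HasDerivAt g (u x * f x - w * g x) x)
    (x₀ : ℝ) (h0 : ∀ x ≤ x₀, 0 < f x ∧ 0 < g x) :
    ∀ x : ℝ, 0 < f x ∧ 0 < g x :=
  stmt_18_general u f g hupos w hf hg x₀ h0
end

section
/- Let u : ℝ → ℝ be continuous with u(x) > 0 for all x, and let w ∈ ℝ. Let f, g : ℝ → ℝ be differentiable with f'(x) = u(x)·g(x) and g'(x) = u(x)·f(x) − w·g(x) for all x ∈ ℝ, and suppose there exists x₀ ∈ ℝ with f(x) > 0 and g(x) > 0 for all x ≤ x₀. If moreover f(x) → 1 as x → +∞, then f is strictly increasing on ℝ and f(x) < 1 for every x ∈ ℝ. -/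
open Filter Set Real

/-!
Positivity of `f` and `g` propagates to the right: at the first point `m` where it could fail,
`f` is nondecreasing on `(-∞, m]` because `f' = u g ≥ 0` there, and so is `g(x) e^{wx}`, whose
derivative is `u f e^{wx} ≥ 0`; both stay positive at `m`. Hence `f' = u g > 0` everywhere, and a
strictly increasing function tending to `1` stays below `1`.
-/

/-- Continuous induction towards `+∞`, started from a half-line `(-∞, x₀]`. -/
theorem forall_of_forall_le_of_forall_lt_imp {P : ℝ → Prop} (hclosed : IsClosed {x | ¬P x})
    {x₀ : ℝ} (hbase : ∀ x ≤ x₀, P x) (hstep : ∀ m, (∀ x < m, P x) → P m) (y : ℝ) : P y := by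
  by_contra hy
  have hbdd : BddBelow {x | ¬P x} :=
    ⟨x₀, fun x hx => le_of_not_ge fun hle => hx (hbase x hle)⟩
  have hmem : sInf {x | ¬P x} ∈ {x | ¬P x} := hclosed.csInf_mem ⟨y, hy⟩ hbdd
  exact hmem <| hstep _ fun x hx => by_contra fun hPx => (csInf_le hbdd hPx).not_gt hx

theorem pos_of_forall_lt_pos_of_hasDerivAt_nonneg {φ φ' : ℝ → ℝ} {m : ℝ}
    (hφ : ∀ x ≤ m, HasDerivAt φ (φ' x) x) (hpos : ∀ x < m, 0 < φ x)
    (hderiv : ∀ x < m, 0 ≤ φ' x) : 0 < φ m := by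
  have hmono : MonotoneOn φ (Iic m) := by
    refine monotoneOn_of_hasDerivWithinAt_nonneg (f' := φ') (convex_Iic m)
      (fun x hx => (hφ x hx).continuousAt.continuousWithinAt) (fun x hx => ?_) (fun x hx => ?_)
    · rw [interior_Iic] at hx
      exact (hφ x hx.le).hasDerivWithinAt
    · rw [interior_Iic] at hx
      exact hderiv x hx
  calc 0 < φ (m - 1) := hpos _ (by linarith)
    _ ≤ φ m := hmono (by simp) (mem_Iic.2 le_rfl) (by linarith)

/-- The integrating factor `e^{wx}` removes the damping term of `g' = a - w g`. -/
theorem hasDerivAt_mul_exp_of_hasDerivAt_sub {g : ℝ → ℝ} {a w x : ℝ}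
    (hg : HasDerivAt g (a - w * g x) x) :
    HasDerivAt (fun y => g y * exp (w * y)) (a * exp (w * x)) x := by
  have hexp : HasDerivAt (fun y => exp (w * y)) (exp (w * x) * w) x := by
    simpa [mul_comm] using ((hasDerivAt_id x).const_mul w).exp
  exact (hg.mul hexp).congr_deriv (by ring)

theorem StrictMono.lt_of_tendsto_atTop {β : Type*} [PartialOrder β] [IsDirectedOrder β]
    [NoMaxOrder β] {f : β → ℝ} {a : ℝ} (hf : StrictMono f) (ha : Tendsto f atTop (nhds a))
    (b : β) : f b < a := by
  obtain ⟨c, hbc⟩ := exists_gt b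
  exact (hf hbc).trans_le (hf.monotone.ge_of_tendsto ha c)

theorem laxPair_pos_of_forall_le_pos {u f g : ℝ → ℝ} (hu : ∀ x, 0 ≤ u x) {w : ℝ}
    (hf : ∀ x, HasDerivAt f (u x * g x) x)
    (hg : ∀ x, HasDerivAt g (u x * f x - w * g x) x)
    {x₀ : ℝ} (h0 : ∀ x ≤ x₀, 0 < f x ∧ 0 < g x) (x : ℝ) : 0 < f x ∧ 0 < g x := by
  have hfc : Continuous f := continuous_iff_continuousAt.2 fun x => (hf x).continuousAt
  have hgc : Continuous g := continuous_iff_continuousAt.2 fun x => (hg x).continuousAt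
  have hclosed : IsClosed {x | ¬(0 < f x ∧ 0 < g x)} :=
    ((isOpen_lt continuous_const hfc).inter (isOpen_lt continuous_const hgc)).isClosed_compl
  refine forall_of_forall_le_of_forall_lt_imp hclosed h0 (fun m hlt => ⟨?_, ?_⟩) x
  · exact pos_of_forall_lt_pos_of_hasDerivAt_nonneg (fun x _ => hf x) (fun x hx => (hlt x hx).1)
      fun x hx => mul_nonneg (hu x) (hlt x hx).2.le
  · have hgexp : 0 < g m * exp (w * m) :=
      pos_of_forall_lt_pos_of_hasDerivAt_nonneg (φ := fun y => g y * exp (w * y))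
        (fun x _ => hasDerivAt_mul_exp_of_hasDerivAt_sub (hg x))
        (fun x hx => mul_pos (hlt x hx).2 (exp_pos _))
        fun x hx => mul_nonneg (mul_nonneg (hu x) (hlt x hx).1.le) (exp_pos _).le
    exact (mul_pos_iff_of_pos_right (exp_pos _)).1 hgexp

theorem stmt_19_general (u f g : ℝ → ℝ) (hupos : ∀ x, 0 < u x) (w : ℝ)
    (hf : ∀ x, HasDerivAt f (u x * g x) x)
    (hg : ∀ x, HasDerivAt g (u x * f x - w * g x) x)
    (x₀ : ℝ) (h0 : ∀ x ≤ x₀, 0 < f x ∧ 0 < g x)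
    (hlim : Tendsto f atTop (nhds 1)) :
    StrictMono f ∧ ∀ x : ℝ, f x < 1 := by
  have hmono : StrictMono f := strictMono_of_deriv_pos fun x => by
    rw [(hf x).deriv]
    exact mul_pos (hupos x) (laxPair_pos_of_forall_le_pos (fun x => (hupos x).le) hf hg h0 x).2
  exact ⟨hmono, hmono.lt_of_tendsto_atTop hlim⟩

/-- Under the hypotheses of Statement 18, if moreover `f(x) → 1` as
`x → +∞`, then `f` is strictly increasing on `ℝ` and `f(x) < 1` for every `x`. -/
theorem stmt_19 (u f g : ℝ → ℝ) (hu : Continuous u) (hupos : ∀ x, 0 < u x) (w : ℝ)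
    (hf : ∀ x, HasDerivAt f (u x * g x) x)
    (hg : ∀ x, HasDerivAt g (u x * f x - w * g x) x)
    (x₀ : ℝ) (h0 : ∀ x ≤ x₀, 0 < f x ∧ 0 < g x)
    (hlim : Tendsto f atTop (nhds 1)) :
    StrictMono f ∧ ∀ x : ℝ, f x < 1 :=
  stmt_19_general u f g hupos w hf hg x₀ h0 hlim
end
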